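/- Let X ⊆ ℝ^m be nonempty, closed, and convex, and let c : ℝ^m → ℝ^m be continuous on X. Let X* ⊆ X be an evolutionarily stable set of (X, c), and let x* ∈ X*. Then x* is ⪯_c-minimal. -/

import Mathlib

open Set

noncomputable section

/-- The path point `y_ε = ε x + (1 - ε) y`. -/
def pathPt {m : ℕ} (x y : EuclideanSpace ℝ (Fin m)) (ε : ℝ) :
    EuclideanSpace ℝ (Fin m) :=
  ε • x + (1 - ε) • y

/-- The linear vector polyorder `x ⪯_c y`: for all `ε ∈ [0,1]`,
`⟨x, c(y_ε)⟩ ≤ ⟨y, c(y_ε)⟩`. -/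
def vecLe {m : ℕ} (c : EuclideanSpace ℝ (Fin m) → EuclideanSpace ℝ (Fin m))
    (x y : EuclideanSpace ℝ (Fin m)) : Prop :=
  ∀ ε ∈ Icc (0:ℝ) 1,
    (inner ℝ x (c (pathPt x y ε)) : ℝ) ≤ inner ℝ y (c (pathPt x y ε))

/-- The strict part `x ≺_c y` of the linear vector polyorder. -/
def vecLt {m : ℕ} (c : EuclideanSpace ℝ (Fin m) → EuclideanSpace ℝ (Fin m))
    (x y : EuclideanSpace ℝ (Fin m)) : Prop :=
  vecLe c x y ∧ ¬ vecLe c y x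

/-- `x*` is `⪯_c`-minimal in `X`: no element of `X` strictly dominates it. -/
def vecMinimal {m : ℕ} (X : Set (EuclideanSpace ℝ (Fin m)))
    (c : EuclideanSpace ℝ (Fin m) → EuclideanSpace ℝ (Fin m))
    (xs : EuclideanSpace ℝ (Fin m)) : Prop :=
  ∀ x ∈ X, ¬ vecLt c x xs

/-- `Xs` is an evolutionarily stable set of `(X, c)`. -/
def IsESSet {m : ℕ} (X : Set (EuclideanSpace ℝ (Fin m)))
    (c : EuclideanSpace ℝ (Fin m) → EuclideanSpace ℝ (Fin m))
    (Xs : Set (EuclideanSpace ℝ (Fin m))) : Prop :=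
  Xs ⊆ X ∧ Xs.Nonempty ∧ IsClosed Xs ∧
    ∀ xs ∈ Xs, ∃ O : Set (EuclideanSpace ℝ (Fin m)), O ⊆ X ∧ O ∈ nhdsWithin xs X ∧
      ∀ x ∈ O, (inner ℝ xs (c x) : ℝ) ≤ inner ℝ x (c x) ∧
        (x ∉ Xs → (inner ℝ xs (c x) : ℝ) < inner ℝ x (c x))

/-!
Suppose `x ∈ X` satisfies `x ⪯_c x*` and write `g ε = ⟨x - x*, c(y_ε)⟩` along the segment
`y_ε = εx + (1 - ε)x*`; then `g ≤ 0` on `[0, 1]`, and `x* ⪯_c x` means `g ≥ 0` on `[0, 1]`.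
If `y_s ∈ X*`, the ESS inequality at `y_s` tested at `y_ε` for `ε` slightly larger than `s` reads
`(ε - s) g ε ≥ 0`, strictly when `y_ε ∉ X*`. Together with `g ≤ 0` this forces `y_ε ∈ X*`, so by
continuous induction the whole segment lies in `X*`; then `g ≥ 0` just to the right of every
point of `[0, 1)`, and continuity of `g` gives `g ≥ 0` on all of `[0, 1]`.
-/

open Filter Topology

section ContinuousInduction

variable {α : Type*} [LinearOrder α] [TopologicalSpace α] [OrderTopology α] [DenselyOrdered α]

theorem IsClosed.Icc_subset_of_forall_mem_nhdsGT {a b : α} {s : Set α}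
    (hs : IsClosed (s ∩ Icc a b)) (hab : a ≠ b) (h : ∀ t ∈ Ico a b, s ∈ 𝓝[>] t) :
    Icc a b ⊆ s := by
  have hIco : Ico a b ⊆ s ∩ Icc a b := fun t ht => by
    have := nhdsGT_neBot_of_exists_gt ⟨b, ht.2⟩
    have hev : ∀ᶠ u in 𝓝[>] t, u ∈ s ∩ Icc a b := by
      filter_upwards [h t ht, Ioo_mem_nhdsGT ht.2] with u hus hu
      exact ⟨hus, ht.1.trans hu.1.le, hu.2.le⟩
    exact hs.mem_of_frequently_of_tendsto hev.frequently nhdsWithin_le_nhds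
  rw [← closure_Ico hab]
  exact (closure_minimal hIco hs).trans inter_subset_left

end ContinuousInduction

section Segment

variable {m : ℕ} {x y : EuclideanSpace ℝ (Fin m)}

theorem pathPt_zero (x y : EuclideanSpace ℝ (Fin m)) : pathPt x y 0 = y := by
  simp [pathPt]

theorem pathPt_eq_pathPt_one_sub (x y : EuclideanSpace ℝ (Fin m)) (ε : ℝ) :
    pathPt x y ε = pathPt y x (1 - ε) := by
  unfold pathPt
  module

theorem pathPt_sub_pathPt (x y : EuclideanSpace ℝ (Fin m)) (ε s : ℝ) :
    pathPt x y ε - pathPt x y s = (ε - s) • (x - y) := by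
  unfold pathPt
  module

theorem continuous_pathPt (x y : EuclideanSpace ℝ (Fin m)) : Continuous (pathPt x y) := by
  unfold pathPt
  fun_prop

theorem Convex.pathPt_mem {X : Set (EuclideanSpace ℝ (Fin m))} (hX : Convex ℝ X)
    (hx : x ∈ X) (hy : y ∈ X) {ε : ℝ} (hε : ε ∈ Icc (0 : ℝ) 1) : pathPt x y ε ∈ X :=
  hX hx hy hε.1 (sub_nonneg.2 hε.2) (add_sub_cancel _ _)

end Segment

section Polyorder

variable {m : ℕ} {c : EuclideanSpace ℝ (Fin m) → EuclideanSpace ℝ (Fin m)}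
  {x y : EuclideanSpace ℝ (Fin m)}

theorem vecLe_iff_inner_nonpos :
    vecLe c x y ↔ ∀ ε ∈ Icc (0 : ℝ) 1, inner ℝ (x - y) (c (pathPt x y ε)) ≤ 0 := by
  simp only [vecLe, inner_sub_left, sub_nonpos]

theorem vecLe_swap_iff_inner_nonneg :
    vecLe c y x ↔ ∀ ε ∈ Icc (0 : ℝ) 1, 0 ≤ inner ℝ (x - y) (c (pathPt x y ε)) := by
  have hIcc : ∀ ε : ℝ, ε ∈ Icc (0 : ℝ) 1 ↔ 1 - ε ∈ Icc (0 : ℝ) 1 := fun ε => by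
    simp only [mem_Icc, sub_nonneg, sub_le_self_iff, and_comm]
  simp only [vecLe, inner_sub_left, sub_nonneg]
  constructor
  · intro h ε hε
    simpa [pathPt_eq_pathPt_one_sub x y ε] using h (1 - ε) ((hIcc ε).1 hε)
  · intro h ε hε
    simpa [pathPt_eq_pathPt_one_sub y x ε] using h (1 - ε) ((hIcc ε).1 hε)

end Polyorder

section ESS

variable {m : ℕ} {X Xs : Set (EuclideanSpace ℝ (Fin m))}
  {c : EuclideanSpace ℝ (Fin m) → EuclideanSpace ℝ (Fin m)} {x y : EuclideanSpace ℝ (Fin m)}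

theorem IsESSet.eventually_nhdsGT_inner_nonneg (hXs : IsESSet X c Xs) (hX : Convex ℝ X)
    (hx : x ∈ X) (hy : y ∈ X) {s : ℝ} (hs : s ∈ Ico (0 : ℝ) 1) (hps : pathPt x y s ∈ Xs) :
    ∀ᶠ ε in 𝓝[>] s, 0 ≤ inner ℝ (x - y) (c (pathPt x y ε)) ∧
      (pathPt x y ε ∉ Xs → 0 < inner ℝ (x - y) (c (pathPt x y ε))) := by
  obtain ⟨O, -, hO, hESS⟩ := hXs.2.2.2 _ hps
  have hIoo : Ioo s 1 ∈ 𝓝[>] s := Ioo_mem_nhdsGT hs.2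
  have hpath : Tendsto (pathPt x y) (𝓝[>] s) (𝓝[X] (pathPt x y s)) := by
    refine tendsto_nhdsWithin_iff.2 ⟨(continuous_pathPt x y).continuousAt.mono_left
      nhdsWithin_le_nhds, ?_⟩
    filter_upwards [hIoo] with ε hε
    exact hX.pathPt_mem hx hy ⟨hs.1.trans hε.1.le, hε.2.le⟩
  filter_upwards [hpath hO, hIoo] with ε hεO hε
  have hgap : inner ℝ (pathPt x y ε) (c (pathPt x y ε)) -
      inner ℝ (pathPt x y s) (c (pathPt x y ε)) =
      (ε - s) * inner ℝ (x - y) (c (pathPt x y ε)) := by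
    rw [← inner_sub_left, pathPt_sub_pathPt, real_inner_smul_left]
  have hεs : 0 < ε - s := sub_pos.2 hε.1
  obtain ⟨hle, hlt⟩ := hESS _ hεO
  exact ⟨(mul_nonneg_iff_of_pos_left hεs).1 (hgap ▸ sub_nonneg.2 hle),
    fun hn => (mul_pos_iff_of_pos_left hεs).1 (hgap ▸ sub_pos.2 (hlt hn))⟩

theorem IsESSet.pathPt_mem_of_vecLe (hXs : IsESSet X c Xs) (hX : Convex ℝ X) (hx : x ∈ X)
    (hy : y ∈ Xs) (hxy : vecLe c x y) : Icc (0 : ℝ) 1 ⊆ pathPt x y ⁻¹' Xs := by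
  have hclosed : IsClosed (pathPt x y ⁻¹' Xs ∩ Icc 0 1) :=
    (hXs.2.2.1.preimage (continuous_pathPt x y)).inter isClosed_Icc
  refine hclosed.Icc_subset_of_forall_mem_nhdsWithin (by rwa [mem_preimage, pathPt_zero])
    fun s ⟨hps, hs⟩ => ?_
  filter_upwards [hXs.eventually_nhdsGT_inner_nonneg hX hx (hXs.1 hy) hs hps,
    Ioo_mem_nhdsGT hs.2] with ε hgε hε
  by_contra hn
  exact (hgε.2 hn).not_ge (vecLe_iff_inner_nonpos.1 hxy ε ⟨hs.1.trans hε.1.le, hε.2.le⟩)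

theorem IsESSet.vecLe_swap (hXs : IsESSet X c Xs) (hX : Convex ℝ X) (hc : ContinuousOn c X)
    (hx : x ∈ X) (hy : y ∈ Xs) (hxy : vecLe c x y) : vecLe c y x := by
  have hyX := hXs.1 hy
  have hg : ContinuousOn (fun ε => inner ℝ (x - y) (c (pathPt x y ε))) (Icc 0 1) :=
    continuousOn_const.inner
      (hc.comp (continuous_pathPt x y).continuousOn fun _ hε => hX.pathPt_mem hx hyX hε)
  have hclosed : IsClosed ({ε | 0 ≤ inner ℝ (x - y) (c (pathPt x y ε))} ∩ Icc 0 1) := by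
    rw [inter_comm]
    exact hg.preimage_isClosed_of_isClosed isClosed_Icc isClosed_Ici
  refine vecLe_swap_iff_inner_nonneg.2 fun ε hε =>
    hclosed.Icc_subset_of_forall_mem_nhdsGT zero_ne_one (fun s hs => ?_) hε
  have hps := hXs.pathPt_mem_of_vecLe hX hx hy hxy (Ico_subset_Icc_self hs)
  filter_upwards [hXs.eventually_nhdsGT_inner_nonneg hX hx hyX hs hps] with ε hε
  exact hε.1

end ESS

theorem mem_isESSet_vecMinimal_general {m : ℕ} (X : Set (EuclideanSpace ℝ (Fin m)))
    (hXconv : Convex ℝ X)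
    (c : EuclideanSpace ℝ (Fin m) → EuclideanSpace ℝ (Fin m)) (hc : ContinuousOn c X)
    (Xs : Set (EuclideanSpace ℝ (Fin m))) (hXs : IsESSet X c Xs)
    (xs : EuclideanSpace ℝ (Fin m)) (hxs : xs ∈ Xs) :
    vecMinimal X c xs := fun _ hx ⟨hle, hnle⟩ => hnle (hXs.vecLe_swap hXconv hc hx hxs hle)

/-- Every member of an evolutionarily stable set is `⪯_c`-minimal. -/
theorem mem_isESSet_vecMinimal {m : ℕ} (X : Set (EuclideanSpace ℝ (Fin m)))
    (hXne : X.Nonempty) (hXcl : IsClosed X) (hXconv : Convex ℝ X)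
    (c : EuclideanSpace ℝ (Fin m) → EuclideanSpace ℝ (Fin m)) (hc : ContinuousOn c X)
    (Xs : Set (EuclideanSpace ℝ (Fin m))) (hXs : IsESSet X c Xs)
    (xs : EuclideanSpace ℝ (Fin m)) (hxs : xs ∈ Xs) :
    vecMinimal X c xs :=
  mem_isESSet_vecMinimal_general X hXconv c hc Xs hXs xs hxs
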